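/- Let M_1,…,M_m be nonnegative d×d matrices such that H = M_1 + ⋯ + M_m is irreducible (i.e. Σ_{k=1}^r H^k has all entries positive for some r ≥ 1). Then there exist r ≥ 1 and a constant C > 0 such that for any finite words I and J over {1,…,m} with M_I ≠ 0 and M_J ≠ 0, there exists a word K₀ of length between 1 and r with 0 < ‖M_{I K₀ J}‖ ≤ C·‖M_I‖·‖M_J‖. -/
import Mathlib


open Filter MeasureTheory
open scoped Classical BigOperators Topology ENNReal

/-- `‖B‖ = 1ᵗ B 1`, the sum of all entries of `B`. -/
def matNorm {d : ℕ} (B : Matrix (Fin d) (Fin d) ℝ) : ℝ := ∑ i, ∑ j, B i j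

/-- The matrix product `M_J = M_{j_1} ⋯ M_{j_n}` of a word `J = j_1 ⋯ j_n`. -/
noncomputable def MprodW {m d : ℕ} (M : Fin m → Matrix (Fin d) (Fin d) ℝ)
    {n : ℕ} (J : Fin n → Fin m) : Matrix (Fin d) (Fin d) ℝ :=
  ((List.ofFn J).map M).prod

section Aux

variable {m d : ℕ} (M : Fin m → Matrix (Fin d) (Fin d) ℝ)

lemma MprodW_append {n ℓ : ℕ} (I : Fin n → Fin m) (J : Fin ℓ → Fin m) :
    MprodW M (Fin.append I J) = MprodW M I * MprodW M J := by
  unfold MprodW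
  rw [List.ofFn_fin_append, List.map_append, List.prod_append]

lemma MprodW_cons {n : ℕ} (i : Fin m) (K : Fin n → Fin m) :
    MprodW M (Fin.cons i K) = M i * MprodW M K := by
  unfold MprodW
  rw [List.ofFn_succ]
  simp

lemma mul_entry_nonneg {A B : Matrix (Fin d) (Fin d) ℝ}
    (hA : ∀ a b, 0 ≤ A a b) (hB : ∀ a b, 0 ≤ B a b) :
    ∀ a b, 0 ≤ (A * B) a b := by
  intro a b
  rw [Matrix.mul_apply]
  exact Finset.sum_nonneg fun k _ => mul_nonneg (hA a k) (hB k b)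

lemma MprodW_nonneg (hnn : ∀ i a b, 0 ≤ M i a b) :
    ∀ {n : ℕ} (J : Fin n → Fin m) (a b : Fin d), 0 ≤ MprodW M J a b := by
  intro n
  induction n with
  | zero =>
    intro J a b
    have : MprodW M J = 1 := by unfold MprodW; simp
    rw [this, Matrix.one_apply]
    split <;> norm_num
  | succ n ih =>
    intro J a b
    have : J = Fin.cons (J 0) (fun i => J i.succ) := by
      ext i
      refine Fin.cases ?_ ?_ i <;> simp
    rw [this, MprodW_cons]
    exact mul_entry_nonneg (hnn _) (ih _) a b

lemma pow_eq_sum_MprodW (k : ℕ) :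
    (∑ i : Fin m, M i) ^ k = ∑ K : Fin k → Fin m, MprodW M K := by
  induction k with
  | zero =>
    rw [pow_zero]
    have : ∀ K : Fin 0 → Fin m, MprodW M K = 1 := by
      intro K; unfold MprodW; simp
    simp [this]
  | succ k ih =>
    rw [pow_succ', ih, ← Equiv.sum_comp (Fin.consEquiv (fun _ : Fin (k+1) => Fin m))
      (fun K => MprodW M K), Fintype.sum_prod_type, Finset.sum_mul]
    refine Finset.sum_congr rfl fun i _ => ?_
    rw [Finset.mul_sum]
    refine Finset.sum_congr rfl fun K _ => ?_
    exact (MprodW_cons M i K).symm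

lemma matNorm_nonneg {B : Matrix (Fin d) (Fin d) ℝ} (hB : ∀ a b, 0 ≤ B a b) :
    0 ≤ matNorm B :=
  Finset.sum_nonneg fun i _ => Finset.sum_nonneg fun j _ => hB i j

lemma entry_le_matNorm {B : Matrix (Fin d) (Fin d) ℝ} (hB : ∀ a b, 0 ≤ B a b)
    (a b : Fin d) : B a b ≤ matNorm B := by
  calc B a b ≤ ∑ j, B a j :=
        Finset.single_le_sum (fun j _ => hB a j) (Finset.mem_univ b)
    _ ≤ matNorm B :=
        Finset.single_le_sum (f := fun i => ∑ j, B i j)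
          (fun i _ => Finset.sum_nonneg fun j _ => hB i j) (Finset.mem_univ a)

lemma row_sum_le_matNorm {B : Matrix (Fin d) (Fin d) ℝ} (hB : ∀ a b, 0 ≤ B a b)
    (k : Fin d) : ∑ j, B k j ≤ matNorm B := by
  unfold matNorm
  exact Finset.single_le_sum (f := fun i => ∑ j, B i j)
    (fun i _ => Finset.sum_nonneg fun j _ => hB i j) (Finset.mem_univ k)

lemma matNorm_mul_le {A B : Matrix (Fin d) (Fin d) ℝ}
    (hA : ∀ a b, 0 ≤ A a b) (hB : ∀ a b, 0 ≤ B a b) :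
    matNorm (A * B) ≤ matNorm A * matNorm B := by
  have h1 : matNorm (A * B) = ∑ k, (∑ i, A i k) * (∑ j, B k j) := by
    unfold matNorm
    simp_rw [Matrix.mul_apply, Finset.sum_mul_sum]
    calc ∑ i, ∑ j, ∑ k, A i k * B k j
        = ∑ i, ∑ k, ∑ j, A i k * B k j :=
          Finset.sum_congr rfl fun i _ => Finset.sum_comm
      _ = ∑ k, ∑ i, ∑ j, A i k * B k j := Finset.sum_comm
  rw [h1]
  have h2 : ∑ k, (∑ i, A i k) * (∑ j, B k j) ≤ ∑ k, (∑ i, A i k) * matNorm B :=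
    Finset.sum_le_sum fun k _ =>
      mul_le_mul_of_nonneg_left (row_sum_le_matNorm hB k)
        (Finset.sum_nonneg fun i _ => hA i k)
  refine h2.trans ?_
  rw [← Finset.sum_mul]
  have h3 : ∑ k, ∑ i, A i k = matNorm A := by
    unfold matNorm; exact Finset.sum_comm
  rw [h3]

end Aux

/-- (4.2): if `H = M_1 + ⋯ + M_m` is irreducible, then there are
`r ≥ 1` and `C > 0` such that any two words `I, J` with `M_I ≠ 0 ≠ M_J` can be connected
by a word `K₀` of length between `1` and `r` with `0 < ‖M_{IK₀J}‖ ≤ C ‖M_I‖ ‖M_J‖`. -/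
theorem exists_connecting_word
    (m d : ℕ) (hm : 2 ≤ m) (hd : 1 ≤ d)
    (M : Fin m → Matrix (Fin d) (Fin d) ℝ)
    (hnn : ∀ i : Fin m, ∀ a b : Fin d, 0 ≤ M i a b)
    (hirr : ∃ r : ℕ, 1 ≤ r ∧ ∀ a b : Fin d,
      0 < (∑ k ∈ Finset.Icc 1 r, (∑ i : Fin m, M i) ^ k) a b) :
    ∃ r : ℕ, 1 ≤ r ∧ ∃ C : ℝ, 0 < C ∧
      ∀ (n ℓ : ℕ) (I : Fin n → Fin m) (J : Fin ℓ → Fin m),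
        MprodW M I ≠ 0 → MprodW M J ≠ 0 →
        ∃ k : ℕ, 1 ≤ k ∧ k ≤ r ∧ ∃ K₀ : Fin k → Fin m,
          0 < matNorm (MprodW M (Fin.append (Fin.append I K₀) J)) ∧
          matNorm (MprodW M (Fin.append (Fin.append I K₀) J)) ≤
            C * matNorm (MprodW M I) * matNorm (MprodW M J) := by
  obtain ⟨r, hr1, hpos⟩ := hirr
  set H := ∑ i : Fin m, M i with hH
  set S := ∑ k ∈ Finset.Icc 1 r, H ^ k with hS
  -- entries of H^k are nonneg
  have hHk : ∀ k : ℕ, ∀ a b : Fin d, 0 ≤ (H ^ k) a b := by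
    intro k a b
    rw [pow_eq_sum_MprodW, Matrix.sum_apply]
    exact Finset.sum_nonneg fun K _ => MprodW_nonneg M hnn K a b
  have hSnn : ∀ a b : Fin d, 0 ≤ S a b := fun a b => le_of_lt (hpos a b)
  refine ⟨r, hr1, matNorm S, ?_, ?_⟩
  · -- matNorm S > 0
    obtain ⟨a⟩ : Nonempty (Fin d) := ⟨⟨0, hd⟩⟩
    have := entry_le_matNorm hSnn a a
    linarith [hpos a a]
  intro n ℓ I J hI hJ
  -- pick positive entries of M_I, M_J
  have hInn := fun a b => MprodW_nonneg M hnn I a b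
  have hJnn := fun a b => MprodW_nonneg M hnn J a b
  obtain ⟨a, b, hab⟩ : ∃ a b, 0 < MprodW M I a b := by
    by_contra h
    push_neg at h
    exact hI (by ext a b; exact le_antisymm (h a b) (hInn a b))
  obtain ⟨a', b', hab'⟩ : ∃ a b, 0 < MprodW M J a b := by
    by_contra h
    push_neg at h
    exact hJ (by ext a b; exact le_antisymm (h a b) (hJnn a b))
  -- find k with (H^k) b a' > 0
  have hSba : 0 < ∑ k ∈ Finset.Icc 1 r, (H ^ k) b a' := by
    have := hpos b a'
    rw [hS, Matrix.sum_apply] at this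
    exact this
  obtain ⟨k, hk, hkpos⟩ : ∃ k ∈ Finset.Icc 1 r, 0 < (H ^ k) b a' := by
    by_contra h
    push_neg at h
    have : ∑ k ∈ Finset.Icc 1 r, (H ^ k) b a' = 0 :=
      Finset.sum_eq_zero fun k hk => le_antisymm (h k hk) (hHk k b a')
    linarith
  obtain ⟨hk1, hkr⟩ := Finset.mem_Icc.mp hk
  -- find a word K₀ of length k realizing it
  obtain ⟨K₀, hK₀⟩ : ∃ K₀ : Fin k → Fin m, 0 < MprodW M K₀ b a' := by
    by_contra h
    push_neg at h
    have : (H ^ k) b a' = 0 := by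
      rw [pow_eq_sum_MprodW, Matrix.sum_apply]
      exact Finset.sum_eq_zero fun K _ =>
        le_antisymm (h K) (MprodW_nonneg M hnn K b a')
    linarith
  refine ⟨k, hk1, hkr, K₀, ?_, ?_⟩
  all_goals
    have hprod : MprodW M (Fin.append (Fin.append I K₀) J)
        = MprodW M I * MprodW M K₀ * MprodW M J := by
      rw [MprodW_append, MprodW_append]
  · -- positivity
    rw [hprod]
    have hKnn := fun x y => MprodW_nonneg M hnn K₀ x y
    have hIK := mul_entry_nonneg hInn hKnn
    have hentry : MprodW M I a b * MprodW M K₀ b a' * MprodW M J a' b'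
        ≤ (MprodW M I * MprodW M K₀ * MprodW M J) a b' := by
      calc MprodW M I a b * MprodW M K₀ b a' * MprodW M J a' b'
          ≤ (MprodW M I * MprodW M K₀) a a' * MprodW M J a' b' := by
            refine mul_le_mul_of_nonneg_right ?_ (hJnn a' b')
            rw [Matrix.mul_apply]
            exact Finset.single_le_sum
              (f := fun x => MprodW M I a x * MprodW M K₀ x a')
              (fun x _ => mul_nonneg (hInn a x) (hKnn x a')) (Finset.mem_univ b)
        _ ≤ (MprodW M I * MprodW M K₀ * MprodW M J) a b' := by
            rw [Matrix.mul_apply (M := MprodW M I * MprodW M K₀)]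
            exact Finset.single_le_sum
              (f := fun x => (MprodW M I * MprodW M K₀) a x * MprodW M J x b')
              (fun x _ => mul_nonneg (hIK a x) (hJnn x b')) (Finset.mem_univ a')
    have := entry_le_matNorm (mul_entry_nonneg hIK hJnn) a b'
    nlinarith [mul_pos (mul_pos hab hK₀) hab']
  · -- upper bound
    rw [hprod]
    have hKnn := fun x y => MprodW_nonneg M hnn K₀ x y
    have hKS : matNorm (MprodW M K₀) ≤ matNorm S := by
      refine Finset.sum_le_sum fun x _ => Finset.sum_le_sum fun y _ => ?_
      calc MprodW M K₀ x y ≤ (H ^ k) x y := by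
            rw [pow_eq_sum_MprodW, Matrix.sum_apply]
            exact Finset.single_le_sum (f := fun K => MprodW M K x y)
              (fun K _ => MprodW_nonneg M hnn K x y) (Finset.mem_univ K₀)
        _ ≤ S x y := by
            rw [hS, Matrix.sum_apply]
            exact Finset.single_le_sum (f := fun j => (H ^ j) x y)
              (fun j _ => hHk j x y) hk
    calc matNorm (MprodW M I * MprodW M K₀ * MprodW M J)
        ≤ matNorm (MprodW M I * MprodW M K₀) * matNorm (MprodW M J) :=
          matNorm_mul_le (mul_entry_nonneg hInn hKnn) hJnn
      _ ≤ matNorm (MprodW M I) * matNorm (MprodW M K₀) * matNorm (MprodW M J) := by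
          refine mul_le_mul_of_nonneg_right (matNorm_mul_le hInn hKnn)
            (matNorm_nonneg hJnn)
      _ ≤ matNorm (MprodW M I) * matNorm S * matNorm (MprodW M J) := by
          refine mul_le_mul_of_nonneg_right ?_ (matNorm_nonneg hJnn)
          exact mul_le_mul_of_nonneg_left hKS (matNorm_nonneg hInn)
      _ = matNorm S * matNorm (MprodW M I) * matNorm (MprodW M J) := by ring
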